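/- arXiv:2012.07314 — 5 statements merged into one kernel-verified Lean document; each statement's English description precedes it below -/
import Mathlib

section
/- In G(n,r,s), for any two vertices x,y with |x ∩ y| = i, the number of vertices z with |z ∩ y| = j and |z ∩ x| = s equals the sum over m from 0 to s of binomial(i,m)·binomial(r-i,s-m)·binomial(r-i,j-m)·binomial(n-2r+i, r-s-j+m). In particular, this count depends only on i, j, n, r, s and not on the choice of x and y. -/
/-!
Split `Fin n` into the four Venn blocks `x ∩ y`, `x \ y`, `y \ x`, `(x ∪ y)ᶜ`, of sizes
`i, r - i, r - i, n + i - 2r`. A subset `z` is determined by its traces on the blocks, and it is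
counted exactly when these traces have sizes `m, s - m, j - m, r - s - j + m`, where
`m = |z ∩ x ∩ y| ≤ s`; for each `m` the traces can be chosen independently.
-/

open Finset

namespace Finset

variable {α : Type*} [DecidableEq α]

theorem card_powerset_filter_inter_and_sdiff (u t : Finset α) (P Q : Finset α → Prop)
    [DecidablePred P] [DecidablePred Q] :
    #{z ∈ u.powerset | P (z ∩ t) ∧ Q (z \ t)} =
      #{p ∈ (u ∩ t).powerset | P p} * #{q ∈ (u \ t).powerset | Q q} := by
  rw [← card_product, ← filter_product]
  refine card_nbij' (fun z => (z ∩ t, z \ t)) (fun w => w.1 ∪ w.2) ?_ ?_ ?_ ?_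
  · intro z hz
    simp only [coe_filter, mem_powerset, Set.mem_ofPred_eq, mem_product] at hz ⊢
    exact ⟨⟨inter_subset_inter_right hz.1, sdiff_subset_sdiff hz.1 le_rfl⟩, hz.2⟩
  · rintro ⟨p, q⟩ hw
    simp only [coe_filter, mem_powerset, Set.mem_ofPred_eq, mem_product] at hw ⊢
    obtain ⟨⟨hp, hq⟩, hP, hQ⟩ := hw
    have hpt : (p ∪ q) ∩ t = p := by grind
    have hqt : (p ∪ q) \ t = q := by grind
    rw [hpt, hqt]
    exact ⟨union_subset (hp.trans inter_subset_left) (hq.trans sdiff_subset), hP, hQ⟩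
  · intro z _
    exact sup_inf_sdiff z t
  · rintro ⟨p, q⟩ hw
    simp only [coe_filter, mem_powerset, mem_product] at hw
    obtain ⟨⟨hp, hq⟩, -⟩ := hw
    ext a <;> grind

theorem card_powerset_filter_card_inter_card_sdiff (u t : Finset α) (a b : ℕ) :
    #{z ∈ u.powerset | #(z ∩ t) = a ∧ #(z \ t) = b} = (#(u ∩ t)).choose a * (#(u \ t)).choose b := by
  rw [card_powerset_filter_inter_and_sdiff u t (#· = a) (#· = b), ← powersetCard_eq_filter,
    ← powersetCard_eq_filter, card_powersetCard, card_powersetCard]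

theorem card_powerset_filter_venn (u x y : Finset α) (a b c d : ℕ) :
    #{z ∈ u.powerset | #(z ∩ x ∩ y) = a ∧ #((z ∩ x) \ y) = b ∧ #(z \ x ∩ y) = c ∧ #((z \ x) \ y) = d} =
      (#(u ∩ x ∩ y)).choose a * (#((u ∩ x) \ y)).choose b * (#(u \ x ∩ y)).choose c *
        (#((u \ x) \ y)).choose d := by
  have split := card_powerset_filter_inter_and_sdiff u x
    (fun p => #(p ∩ y) = a ∧ #(p \ y) = b) (fun q => #(q ∩ y) = c ∧ #(q \ y) = d)
  simp only [and_assoc] at split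
  rw [split, card_powerset_filter_card_inter_card_sdiff,
    card_powerset_filter_card_inter_card_sdiff, ← mul_assoc]

theorem card_venn_blocks (z x y : Finset α) :
    #z = #(z ∩ x ∩ y) + #((z ∩ x) \ y) + #(z \ x ∩ y) + #((z \ x) \ y) ∧
      #(z ∩ x) = #(z ∩ x ∩ y) + #((z ∩ x) \ y) ∧ #(z ∩ y) = #(z ∩ x ∩ y) + #(z \ x ∩ y) := by
  have hz := card_inter_add_card_sdiff z x
  have hzx := card_inter_add_card_sdiff (z ∩ x) y
  have hzx' := card_inter_add_card_sdiff (z \ x) y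
  have hzy := card_inter_add_card_sdiff (z ∩ y) x
  rw [inter_right_comm, ← sdiff_inter_right_comm] at hzy
  omega

end Finset

theorem stmt4_general (n r s i j : ℕ)
    (x y : Finset (Fin n)) (hx : x.card = r) (hy : y.card = r) (hxy : (x ∩ y).card = i) :
    {z : Finset (Fin n) | z.card = r ∧ (z ∩ y).card = j ∧ (z ∩ x).card = s}.ncard =
      ∑ m ∈ Finset.range (s + 1),
        (if m ≤ j ∧ s + j ≤ r + m then
          i.choose m * (r - i).choose (s - m) * (r - i).choose (j - m) *
            (n + i - 2 * r).choose (r + m - s - j)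
        else 0) := by
  have fiber (m : ℕ) (hms : m ≤ s) (z : Finset (Fin n)) :
      ((#z = r ∧ #(z ∩ y) = j ∧ #(z ∩ x) = s) ∧ #(z ∩ x ∩ y) = m) ↔
        (m ≤ j ∧ s + j ≤ r + m) ∧ #(z ∩ x ∩ y) = m ∧ #((z ∩ x) \ y) = s - m ∧
          #(z \ x ∩ y) = j - m ∧ #((z \ x) \ y) = r + m - s - j := by
    have := card_venn_blocks z x y
    omega
  obtain ⟨hn, hxr, hyr⟩ := card_venn_blocks univ x y
  simp only [card_univ, Fintype.card_fin, univ_inter, hx, hy, hxy] at hn hxr hyr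
  rw [Set.ncard_eq_toFinset_card', Set.toFinset_ofPred,
    card_eq_sum_card_fiberwise (f := fun z => #(z ∩ x ∩ y)) (t := range (s + 1))
      fun z hz => by
        have := card_venn_blocks z x y
        simp only [coe_filter, mem_univ, true_and, Set.mem_ofPred_eq] at hz
        simp only [coe_range, Set.mem_Iio]
        omega]
  refine sum_congr rfl fun m hm => ?_
  rw [filter_filter, filter_congr fun z _ => fiber m (Nat.lt_succ_iff.mp (mem_range.mp hm)) z]
  split_ifs with hguard
  · simp only [hguard, true_and]
    rw [← powerset_univ, card_powerset_filter_venn, univ_inter, hxy,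
      show #(x \ y) = r - i by omega, show #(univ \ x ∩ y) = r - i by omega,
      show #((univ \ x) \ y) = n + i - 2 * r by omega]
  · simp [hguard]

/-- In `G(n,r,s)`, for any two vertices `x, y` with `|x ∩ y| = i`, the number of vertices `z`
with `|z ∩ y| = j` and `|z ∩ x| = s` equals
`∑_{m=0}^{s} choose i m * choose (r-i) (s-m) * choose (r-i) (j-m) * choose (n-2r+i) (r-s-j+m)`,
where binomial coefficients with negative arguments are zero (hence the guard
`m ≤ j ∧ s + j ≤ r + m`). In particular, the count depends only on `i, j, n, r, s`. -/
theorem stmt4 (n r s i j : ℕ) (hs : s < r) (hr : r < n) (hi : i ≤ r) (hj : j ≤ r)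
    (x y : Finset (Fin n)) (hx : x.card = r) (hy : y.card = r) (hxy : (x ∩ y).card = i) :
    {z : Finset (Fin n) | z.card = r ∧ (z ∩ y).card = j ∧ (z ∩ x).card = s}.ncard =
      ∑ m ∈ Finset.range (s + 1),
        (if m ≤ j ∧ s + j ≤ r + m then
          i.choose m * (r - i).choose (s - m) * (r - i).choose (j - m) *
            (n + i - 2 * r).choose (r + m - s - j)
        else 0) :=
  stmt4_general n r s i j x y hx hy hxy
end

section
/- For sufficiently large n, the quantity A_i^j (the number of common 'j-neighbors of y and s-neighbors of x' when |x ∩ y| = i) is nonzero if and only if |i - j| ≤ r - s and i + j ≤ r + s. -/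
/-- For sufficiently large `n`, the quantity `A_i^j` (the number of `z` with `|z ∩ y| = j`
and `|z ∩ x| = s`, where `|x ∩ y| = i`) is nonzero iff `|i - j| ≤ r - s` and `i + j ≤ r + s`. -/
theorem stmt7 (r s i j : ℕ) (hs : s < r) (hi : i ≤ r) (hj : j ≤ r) :
    ∃ n₀ : ℕ, ∀ n ≥ n₀, ∀ x y : Finset (Fin n),
      x.card = r → y.card = r → (x ∩ y).card = i →
      ({z : Finset (Fin n) | z.card = r ∧ (z ∩ y).card = j ∧ (z ∩ x).card = s}.ncard ≠ 0 ↔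
        (((i : ℤ) - (j : ℤ)).natAbs ≤ r - s ∧ i + j ≤ r + s)) := by
  refine ⟨3 * r, fun n hn x y hx hy hxy => ?_⟩
  rw [ne_eq, Set.ncard_eq_zero (Set.toFinite _), ← ne_eq, ← Set.nonempty_iff_ne_empty]
  constructor
  · rintro ⟨z, hz, hzy, hzx⟩
    -- key1 : i ≤ j + (r - s)
    have e1 : ((x ∩ y) ∩ z).card + ((x ∩ y) \ z).card = (x ∩ y).card :=
      Finset.card_inter_add_card_sdiff _ _
    have e2 : ((x ∩ y) ∩ z).card ≤ (z ∩ y).card := by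
      apply Finset.card_le_card
      intro t ht
      simp only [Finset.mem_inter] at *
      tauto
    have e3 : ((x ∩ y) \ z).card ≤ (x \ z).card := by
      apply Finset.card_le_card
      apply Finset.sdiff_subset_sdiff Finset.inter_subset_left le_rfl
    have e4 : (x ∩ z).card + (x \ z).card = x.card := Finset.card_inter_add_card_sdiff _ _
    have e5 : (x ∩ z).card = s := by rw [Finset.inter_comm]; exact hzx
    -- key2 : j ≤ i + (r - s)
    have f1 : ((z ∩ y) ∩ x).card + ((z ∩ y) \ x).card = (z ∩ y).card :=
      Finset.card_inter_add_card_sdiff _ _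
    have f2 : ((z ∩ y) ∩ x).card ≤ (x ∩ y).card := by
      apply Finset.card_le_card
      intro t ht
      simp only [Finset.mem_inter] at *
      tauto
    have f3 : ((z ∩ y) \ x).card ≤ (z \ x).card := by
      apply Finset.card_le_card
      apply Finset.sdiff_subset_sdiff Finset.inter_subset_left le_rfl
    have f4 : (z ∩ x).card + (z \ x).card = z.card := Finset.card_inter_add_card_sdiff _ _
    -- key3 : i + j ≤ r + s
    have g1 : ((x ∩ y) ∪ (z ∩ y)).card + ((x ∩ y) ∩ (z ∩ y)).card = (x ∩ y).card + (z ∩ y).card :=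
      Finset.card_union_add_card_inter _ _
    have g2 : ((x ∩ y) ∪ (z ∩ y)).card ≤ y.card := by
      apply Finset.card_le_card
      apply Finset.union_subset Finset.inter_subset_right Finset.inter_subset_right
    have g3 : ((x ∩ y) ∩ (z ∩ y)).card ≤ (z ∩ x).card := by
      apply Finset.card_le_card
      intro t ht
      simp only [Finset.mem_inter] at *
      tauto
    omega
  · rintro ⟨h1, h2⟩
    have key1 : i ≤ j + (r - s) := by omega
    have key2 : j ≤ i + (r - s) := by omega
    set a := max (s + i - r) (max (i + j - r) (s + j - r)) with ha
    have haS : a ≤ s := by omega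
    have haJ : a ≤ j := by omega
    have haI : a ≤ i := by omega
    set b := s - a with hb
    set c := j - a with hc
    set d := r - (s + c) with hd
    have hscr : s + c ≤ r := by omega
    -- cardinalities of the pieces of the Venn diagram
    have hxdy : (x ∩ y).card + (x \ y).card = x.card := Finset.card_inter_add_card_sdiff _ _
    have hydx : (y ∩ x).card + (y \ x).card = y.card := Finset.card_inter_add_card_sdiff _ _
    have hyx : (y ∩ x).card = i := by rw [Finset.inter_comm]; exact hxy
    have hcompl : (x ∪ y)ᶜ.card = n - (x ∪ y).card := by
      rw [Finset.card_compl, Fintype.card_fin]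
    have hunle : (x ∪ y).card ≤ x.card + y.card := Finset.card_union_le _ _
    obtain ⟨A, hA, hAcard⟩ := Finset.exists_subset_card_eq (show a ≤ (x ∩ y).card by omega)
    obtain ⟨B, hB, hBcard⟩ := Finset.exists_subset_card_eq (show b ≤ (x \ y).card by omega)
    obtain ⟨C, hC, hCcard⟩ := Finset.exists_subset_card_eq (show c ≤ (y \ x).card by omega)
    obtain ⟨D, hD, hDcard⟩ := Finset.exists_subset_card_eq (show d ≤ (x ∪ y)ᶜ.card by omega)
    -- subsets
    have hAx : A ⊆ x := hA.trans Finset.inter_subset_left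
    have hAy : A ⊆ y := hA.trans Finset.inter_subset_right
    have hBx : B ⊆ x := hB.trans (Finset.sdiff_subset)
    have hCy : C ⊆ y := hC.trans (Finset.sdiff_subset)
    have hAu : A ⊆ x ∪ y := hAx.trans Finset.subset_union_left
    have hBu : B ⊆ x ∪ y := hBx.trans Finset.subset_union_left
    have hCu : C ⊆ y ∪ x := hCy.trans Finset.subset_union_left
    -- disjointness
    have hAB : Disjoint A B :=
      Disjoint.mono hA hB (Finset.disjoint_sdiff_inter x y).symm
    have hBy : Disjoint B y := Disjoint.mono_left hB Finset.sdiff_disjoint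
    have hCx : Disjoint C x := Disjoint.mono_left hC Finset.sdiff_disjoint
    have hAC : Disjoint A C := (hCx.mono_right hAx).symm
    have hBC : Disjoint B C := (hCx.mono_right hBx).symm
    have hDu : Disjoint D (x ∪ y) := Disjoint.mono_left hD disjoint_compl_left
    have hAD : Disjoint A D := (hDu.mono_right hAu).symm
    have hBD : Disjoint B D := (hDu.mono_right hBu).symm
    have hCD : Disjoint C D := (hDu.mono_right (hCy.trans Finset.subset_union_right)).symm
    have hDx : Disjoint D x := hDu.mono_right Finset.subset_union_left
    have hDy : Disjoint D y := hDu.mono_right Finset.subset_union_right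
    refine ⟨A ∪ B ∪ C ∪ D, ?_, ?_, ?_⟩
    · -- card = r
      show (A ∪ B ∪ C ∪ D).card = r
      rw [Finset.card_union_of_disjoint (by
            simp only [Finset.disjoint_union_left]
            exact ⟨⟨hAD, hBD⟩, hCD⟩),
          Finset.card_union_of_disjoint (by
            simp only [Finset.disjoint_union_left]
            exact ⟨hAC, hBC⟩),
          Finset.card_union_of_disjoint hAB, hAcard, hBcard, hCcard, hDcard]
      omega
    · -- card (z ∩ y) = j
      show ((A ∪ B ∪ C ∪ D) ∩ y).card = j
      have hzy : (A ∪ B ∪ C ∪ D) ∩ y = A ∪ C := by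
        rw [Finset.union_inter_distrib_right, Finset.union_inter_distrib_right,
            Finset.union_inter_distrib_right,
            Finset.inter_eq_left.mpr hAy,
            Finset.disjoint_iff_inter_eq_empty.mp hBy,
            Finset.inter_eq_left.mpr hCy,
            Finset.disjoint_iff_inter_eq_empty.mp hDy,
            Finset.union_empty, Finset.union_empty]
      rw [hzy, Finset.card_union_of_disjoint hAC, hAcard, hCcard]
      omega
    · -- card (z ∩ x) = s
      show ((A ∪ B ∪ C ∪ D) ∩ x).card = s
      have hzx : (A ∪ B ∪ C ∪ D) ∩ x = A ∪ B := by
        rw [Finset.union_inter_distrib_right, Finset.union_inter_distrib_right,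
            Finset.union_inter_distrib_right,
            Finset.inter_eq_left.mpr hAx,
            Finset.inter_eq_left.mpr hBx,
            Finset.disjoint_iff_inter_eq_empty.mp hCx,
            Finset.disjoint_iff_inter_eq_empty.mp hDx,
            Finset.union_empty, Finset.union_empty]
      rw [hzx, Finset.card_union_of_disjoint hAB, hAcard, hBcard]
      omega
end

section
/- For fixed 0 ≤ s < r and indices i,j satisfying |i-j| ≤ r-s and i+j ≤ r+s, the quantity A_i^j is Θ(n^{r-s-j+min{s,i,j}}) as n → ∞. -/
/-! Let `u = x ∪ y` and `a = min s (min i j)`. A set `z` counted by `A_i^j` has at least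
`s + j - a` points in `u`, since `z ∩ x ∩ y` has at most `a` points; so `z` is determined by
`z ∩ u` (at most `2 ^ (2r)` choices) together with `z \ u`, a set of at most
`e = r + a - s - j` points, and `A_i^j = O(n^e)`. Conversely, the conditions on `i, j` allow a
`B ⊆ u` with `#(B ∩ x) = s`, `#(B ∩ y) = j`, `#B = s + j - a`; adjoining to `B` any
`e`-subset of `uᶜ` gives distinct counted sets, so `A_i^j ≥ choose (n - 2r) e = Ω(n^e)`. -/

open Finset Nat

namespace GeneralizedJohnson

variable {α : Type*} [DecidableEq α]

theorem card_sdiff_union_add_le (x y z : Finset α) :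
    #(z \ (x ∪ y)) + #(z ∩ x) + #(z ∩ y) ≤
      #z + min #(z ∩ x) (min #(x ∩ y) #(z ∩ y)) := by
  have hsplit := card_sdiff_add_card_inter z (x ∪ y)
  have hunion := card_union_add_card_inter (z ∩ x) (z ∩ y)
  rw [← inter_union_distrib_left] at hunion
  have hzx : #(z ∩ x ∩ (z ∩ y)) ≤ #(z ∩ x) := card_le_card inter_subset_left
  have hzy : #(z ∩ x ∩ (z ∩ y)) ≤ #(z ∩ y) := card_le_card inter_subset_right
  have hxy : #(z ∩ x ∩ (z ∩ y)) ≤ #(x ∩ y) :=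
    card_le_card fun t ht => by simp only [mem_inter] at ht ⊢; tauto
  omega

theorem exists_subset_union_card_inter (x y : Finset α) {p q c : ℕ} (hp : p ≤ #(x ∩ y))
    (hq : q ≤ #(x \ y)) (hc : c ≤ #(y \ x)) :
    ∃ B ⊆ x ∪ y, #(B ∩ x) = p + q ∧ #(B ∩ y) = p + c ∧ #B = p + q + c := by
  obtain ⟨P, hP, rfl⟩ := exists_subset_card_eq hp
  obtain ⟨Q, hQ, rfl⟩ := exists_subset_card_eq hq
  obtain ⟨R, hR, rfl⟩ := exists_subset_card_eq hc
  simp only [subset_iff, mem_inter, mem_sdiff] at hP hQ hR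
  have hPQ : Disjoint P Q := disjoint_left.2 fun t hP' hQ' => (hQ hQ').2 (hP hP').2
  have hPR : Disjoint P R := disjoint_left.2 fun t hP' hR' => (hR hR').2 (hP hP').1
  have hQR : Disjoint Q R := disjoint_left.2 fun t hQ' hR' => (hR hR').2 (hQ hQ').1
  refine ⟨P ∪ Q ∪ R, ?_, ?_, ?_, ?_⟩
  · intro t; simp only [mem_union]; have := @hP t; have := @hQ t; have := @hR t; tauto
  · have : (P ∪ Q ∪ R) ∩ x = P ∪ Q := by
      ext t; simp only [mem_inter, mem_union]; have := @hP t; have := @hQ t; have := @hR t; tauto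
    rw [this, card_union_of_disjoint hPQ]
  · have : (P ∪ Q ∪ R) ∩ y = P ∪ R := by
      ext t; simp only [mem_inter, mem_union]; have := @hP t; have := @hQ t; have := @hR t; tauto
    rw [this, card_union_of_disjoint hPR]
  · rw [card_union_of_disjoint (disjoint_union_left.2 ⟨hPR, hQR⟩), card_union_of_disjoint hPQ]

theorem sum_range_choose_le_mul_pow {n : ℕ} (hn : 1 ≤ n) (e : ℕ) :
    ∑ k ∈ range (e + 1), n.choose k ≤ (e + 1) * n ^ e := by
  calc ∑ k ∈ range (e + 1), n.choose k ≤ ∑ _k ∈ range (e + 1), n ^ e :=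
        sum_le_sum fun k hk => (Nat.choose_le_pow n k).trans
          (Nat.pow_le_pow_right hn (Nat.lt_succ_iff.1 (mem_range.1 hk)))
    _ = (e + 1) * n ^ e := by rw [sum_const, card_range, smul_eq_mul]

theorem exists_pos_mul_pow_le_choose_sub (m e : ℕ) :
    ∃ c : ℝ, 0 < c ∧ ∃ n₀ : ℕ, ∀ n ≥ n₀,
      c * (n : ℝ) ^ e ≤ ((n - m).choose e : ℝ) := by
  refine ⟨1 / (2 ^ e * e !), by positivity, 2 * m + 2 * e, fun n hn => ?_⟩
  have hhalf : (n : ℝ) ≤ 2 * ((n - m + 1 - e : ℕ) : ℝ) := by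
    exact_mod_cast (by omega : n ≤ 2 * (n - m + 1 - e))
  refine le_trans ?_ (Nat.pow_le_choose e (n - m))
  rw [one_div_mul_eq_div, div_le_div_iff₀ (by positivity) (by positivity)]
  calc (n : ℝ) ^ e * e ! ≤ (2 * ((n - m + 1 - e : ℕ) : ℝ)) ^ e * e ! := by gcongr
    _ = ((n - m + 1 - e : ℕ) : ℝ) ^ e * (2 ^ e * e !) := by ring

variable [Fintype α]

theorem choose_card_compl_le_card {u B : Finset α} {F : Finset (Finset α)} {e : ℕ}
    (hB : B ⊆ u) (hF : ∀ W ⊆ uᶜ, #W = e → B ∪ W ∈ F) : (#uᶜ).choose e ≤ #F := by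
  rw [← card_powersetCard]
  refine card_le_card_of_injOn (B ∪ ·) (fun W hW => ?_) fun W₁ hW₁ W₂ hW₂ h => ?_
  · rw [mem_coe, mem_powersetCard] at hW
    exact hF W hW.1 hW.2
  · have key : ∀ W ∈ uᶜ.powersetCard e, (B ∪ W) \ u = W := fun W hW => by
      rw [mem_powersetCard, subset_compl_iff_disjoint_right] at hW
      rw [union_sdiff_distrib, sdiff_eq_empty_iff_subset.2 hB, empty_union,
        sdiff_eq_self_of_disjoint hW.1]
    rw [← key W₁ hW₁, ← key W₂ hW₂]
    exact congrArg (· \ u) h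

theorem card_filter_card_sdiff_le (u : Finset α) (e : ℕ) :
    #{z : Finset α | #(z \ u) ≤ e} ≤
      2 ^ #u * ∑ k ∈ range (e + 1), (Fintype.card α).choose k := by
  calc #{z : Finset α | #(z \ u) ≤ e}
      ≤ #(u.powerset ×ˢ
          (range (e + 1)).biUnion fun k => (univ : Finset α).powersetCard k) := by
        refine card_le_card_of_injOn (fun z => (z ∩ u, z \ u)) (fun z hz => ?_)
          fun z₁ _ z₂ _ h => ?_
        · rw [coe_filter, Set.mem_ofPred_eq] at hz
          rw [mem_coe, mem_product, mem_powerset, mem_biUnion]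
          exact ⟨inter_subset_right, #(z \ u), mem_range.2 (Nat.lt_succ_of_le hz.2),
            mem_powersetCard_univ.2 rfl⟩
        · simp only [Prod.mk.injEq] at h
          rw [← sdiff_union_inter z₁ u, ← sdiff_union_inter z₂ u, h.1, h.2]
    _ ≤ 2 ^ #u * ∑ k ∈ range (e + 1), (Fintype.card α).choose k := by
        rw [card_product, card_powerset]
        gcongr
        exact card_biUnion_le.trans_eq (by simp [card_powersetCard])

/-- With `i = #(x ∩ y)`, the cardinality of this family is the paper's `A_i^j`. -/
def intersectionFamily (x y : Finset α) (r s j : ℕ) : Finset (Finset α) :=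
  {z | #z = r ∧ #(z ∩ y) = j ∧ #(z ∩ x) = s}

variable {x y : Finset α} {r s i j : ℕ}

theorem card_sdiff_union_le_of_mem_intersectionFamily (hxy : #(x ∩ y) = i)
    {z : Finset α} (hz : z ∈ intersectionFamily x y r s j) :
    #(z \ (x ∪ y)) ≤ r + min s (min i j) - s - j := by
  simp only [intersectionFamily, mem_filter, mem_univ, true_and] at hz
  have := card_sdiff_union_add_le x y z
  omega

theorem card_intersectionFamily_le (hx : #x = r) (hy : #y = r) (hxy : #(x ∩ y) = i)
    (hα : 1 ≤ Fintype.card α) :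
    #(intersectionFamily x y r s j) ≤
      2 ^ (2 * r) * ((r + min s (min i j) - s - j + 1) *
        Fintype.card α ^ (r + min s (min i j) - s - j)) := by
  set e := r + min s (min i j) - s - j
  calc #(intersectionFamily x y r s j) ≤ #{z : Finset α | #(z \ (x ∪ y)) ≤ e} :=
        card_le_card fun z hz => mem_filter.2
          ⟨mem_univ z, card_sdiff_union_le_of_mem_intersectionFamily hxy hz⟩
    _ ≤ 2 ^ #(x ∪ y) * ∑ k ∈ range (e + 1), (Fintype.card α).choose k :=
        card_filter_card_sdiff_le _ e
    _ ≤ 2 ^ (2 * r) * ((e + 1) * Fintype.card α ^ e) := by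
        gcongr
        · exact one_le_two
        · exact (card_union_le x y).trans (by omega)
        · exact sum_range_choose_le_mul_pow hα e

theorem choose_le_card_intersectionFamily (hs : s ≤ r) (hx : #x = r) (hy : #y = r)
    (hxy : #(x ∩ y) = i) (hij : ((i : ℤ) - j).natAbs ≤ r - s) (hij' : i + j ≤ r + s) :
    (Fintype.card α - 2 * r).choose (r + min s (min i j) - s - j) ≤
      #(intersectionFamily x y r s j) := by
  set a := min s (min i j)
  have hxy' : #(x \ y) = r - i := by have := card_sdiff_add_card_inter x y; omega
  have hyx : #(y \ x) = r - i := by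
    have := card_sdiff_add_card_inter y x; rw [inter_comm] at this; omega
  obtain ⟨B, hBu, hBx, hBy, hB⟩ :=
    exists_subset_union_card_inter x y (p := a) (q := s - a) (c := j - a)
      (by omega) (by omega) (by omega)
  calc (Fintype.card α - 2 * r).choose (r + a - s - j)
      ≤ (#(x ∪ y)ᶜ).choose (r + a - s - j) := by
        refine Nat.choose_le_choose _ ?_
        rw [card_compl]
        have := card_union_le x y
        omega
    _ ≤ #(intersectionFamily x y r s j) := by
        refine choose_card_compl_le_card hBu fun W hW hWe => ?_
        rw [subset_compl_iff_disjoint_left, disjoint_union_left] at hW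
        have hBW : Disjoint B W := disjoint_of_subset_left hBu (disjoint_union_left.2 hW)
        simp only [intersectionFamily, mem_filter, mem_univ, true_and]
        rw [card_union_of_disjoint hBW, union_inter_distrib_right, union_inter_distrib_right,
          disjoint_iff_inter_eq_empty.1 hW.1.symm, disjoint_iff_inter_eq_empty.1 hW.2.symm]
        simp only [union_empty]
        omega

end GeneralizedJohnson

open GeneralizedJohnson in
theorem stmt8_general (r s i j : ℕ) (hs : s < r)
    (h1 : ((i : ℤ) - (j : ℤ)).natAbs ≤ r - s) (h2 : i + j ≤ r + s) :
    ∃ c C : ℝ, 0 < c ∧ 0 < C ∧ ∃ n₀ : ℕ, ∀ n ≥ n₀, ∀ x y : Finset (Fin n),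
      x.card = r → y.card = r → (x ∩ y).card = i →
      (c * (n : ℝ) ^ (r + min s (min i j) - s - j) ≤
        (({z : Finset (Fin n) | z.card = r ∧ (z ∩ y).card = j ∧ (z ∩ x).card = s}.ncard : ℕ) : ℝ) ∧
      (({z : Finset (Fin n) | z.card = r ∧ (z ∩ y).card = j ∧ (z ∩ x).card = s}.ncard : ℕ) : ℝ) ≤
        C * (n : ℝ) ^ (r + min s (min i j) - s - j)) := by
  set e := r + min s (min i j) - s - j
  obtain ⟨c, hc, n₀, hchoose⟩ := exists_pos_mul_pow_le_choose_sub (2 * r) e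
  refine ⟨c, 2 ^ (2 * r) * (e + 1), hc, by positivity, max n₀ 1, fun n hn x y hx hy hxy => ?_⟩
  have hfamily : {z : Finset (Fin n) | #z = r ∧ #(z ∩ y) = j ∧ #(z ∩ x) = s}.ncard =
      #(intersectionFamily x y r s j) := by
    rw [intersectionFamily, ← coe_filter_univ, Set.ncard_coe_finset]
  rw [hfamily]
  constructor
  · calc c * (n : ℝ) ^ e ≤ ((n - 2 * r).choose e : ℝ) := hchoose n (le_of_max_le_left hn)
      _ ≤ #(intersectionFamily x y r s j) := by
        have := choose_le_card_intersectionFamily hs.le hx hy hxy h1 h2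
        rw [Fintype.card_fin] at this
        exact_mod_cast this
  · have := card_intersectionFamily_le (s := s) (j := j) hx hy hxy
      (by simpa using le_of_max_le_right hn)
    rw [Fintype.card_fin] at this
    calc (#(intersectionFamily x y r s j) : ℝ) ≤ (2 ^ (2 * r) * ((e + 1) * n ^ e) : ℕ) := by
          exact_mod_cast this
      _ = 2 ^ (2 * r) * (e + 1) * (n : ℝ) ^ e := by push_cast; ring

/-- For fixed `0 ≤ s < r` and indices `i, j` with `|i-j| ≤ r-s` and `i+j ≤ r+s`,
the quantity `A_i^j` is `Θ(n^(r-s-j+min{s,i,j}))` as `n → ∞`. -/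
theorem stmt8 (r s i j : ℕ) (hs : s < r) (hi : i ≤ r) (hj : j ≤ r)
    (h1 : ((i : ℤ) - (j : ℤ)).natAbs ≤ r - s) (h2 : i + j ≤ r + s) :
    ∃ c C : ℝ, 0 < c ∧ 0 < C ∧ ∃ n₀ : ℕ, ∀ n ≥ n₀, ∀ x y : Finset (Fin n),
      x.card = r → y.card = r → (x ∩ y).card = i →
      (c * (n : ℝ) ^ (r + min s (min i j) - s - j) ≤
        (({z : Finset (Fin n) | z.card = r ∧ (z ∩ y).card = j ∧ (z ∩ x).card = s}.ncard : ℕ) : ℝ) ∧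
      (({z : Finset (Fin n) | z.card = r ∧ (z ∩ y).card = j ∧ (z ∩ x).card = s}.ncard : ℕ) : ℝ) ≤
        C * (n : ℝ) ^ (r + min s (min i j) - s - j)) :=
  stmt8_general r s i j hs h1 h2
end

section
/- Let G be a graph in which every edge lies in at least k triangles (i.e., any two adjacent vertices have at least k common neighbors). Then for any edge {x,y} and any t ≥ 2 with t ≤ k, the number of simple paths on t vertices from x to y is at least (k - t)^{t-2}. -/
open SimpleGraph

/-- the number of simple paths on `t` vertices from `x` to `y` in `G` -/
noncomputable def pathCount {V : Type*} (G : SimpleGraph V) (x y : V) (t : ℕ) : ℕ :=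
  Set.ncard {w : G.Walk x y | w.IsPath ∧ w.length + 1 = t}

/-!
A path on `s + 1` vertices from `x` to `y` may start with any common neighbour `v` of `x` and
`y` and continue with any path on `s` vertices from `v` to `y` avoiding `x`. Since `v` and `y`
are again adjacent, induction applies once the statement is strengthened to paths avoiding a
prescribed set `S` of vertices, so that `x` can be added to `S`. Each step offers at least
`k - |S|` choices of `v`, and `|S| + s` never exceeds the `t` of the theorem, which gives at
least `k - t` choices per step.
-/

namespace SimpleGraph

variable {V : Type*} (G : SimpleGraph V)

def avoidingPaths (S : Set V) (x y : V) (s : ℕ) : Set (G.Walk x y) :=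
  {w | w.IsPath ∧ (∀ v ∈ w.support, v ∉ S) ∧ w.length + 1 = s}

variable {G}

theorem finite_setOf_walk_length [Finite V] (x y : V) (n : ℕ) :
    {w : G.Walk x y | w.length = n}.Finite := by
  classical
  have : G.LocallyFinite := fun _ => Fintype.ofFinite _
  exact Set.toFinite _

theorem avoidingPaths_finite [Finite V] (S : Set V) (x y : V) (s : ℕ) :
    (G.avoidingPaths S x y s).Finite :=
  (finite_setOf_walk_length x y (s - 1)).subset fun _ ⟨_, _, hw⟩ => by
    simp only [Set.mem_ofPred_eq]; omega

theorem one_le_ncard_avoidingPaths_two [Finite V] {S : Set V} {x y : V} (hxy : G.Adj x y)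
    (hxS : x ∉ S) (hyS : y ∉ S) : 1 ≤ (G.avoidingPaths S x y 2).ncard := by
  rw [Nat.one_le_iff_ne_zero, Ne, Set.ncard_eq_zero (avoidingPaths_finite S x y 2)]
  refine Set.nonempty_iff_ne_empty.mp ⟨hxy.toWalk, ?_, ?_, rfl⟩
  · simp [hxy.ne]
  · simp [hxS, hyS]

theorem cons_mem_avoidingPaths {S : Set V} {x v y : V} {s : ℕ} (hxv : G.Adj x v) (hxS : x ∉ S)
    {p : G.Walk v y} (hp : p ∈ G.avoidingPaths (insert x S) v y s) :
    Walk.cons hxv p ∈ G.avoidingPaths S x y (s + 1) := by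
  obtain ⟨hpath, havoid, hlen⟩ := hp
  refine ⟨hpath.cons fun hx => havoid x hx (Set.mem_insert x S), ?_, by simp [← hlen]⟩
  rintro u (_ | ⟨_, hu⟩)
  · exact hxS
  · exact fun huS => havoid u hu (Set.mem_insert_of_mem x huS)

/-- Paths are counted by their second vertex. -/
theorem ncard_mul_le_ncard_avoidingPaths_succ [Finite V] {S : Set V} {x y : V} (hxS : x ∉ S)
    {s n : ℕ} (h : ∀ v ∈ (G.neighborSet x ∩ G.neighborSet y) \ S,
      n ≤ (G.avoidingPaths (insert x S) v y s).ncard) :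
    ((G.neighborSet x ∩ G.neighborSet y) \ S).ncard * n ≤
      (G.avoidingPaths S x y (s + 1)).ncard := by
  set T := (G.neighborSet x ∩ G.neighborSet y) \ S
  have : Fintype T := Fintype.ofFinite T
  have : Finite (G.avoidingPaths S x y (s + 1)) := (avoidingPaths_finite _ _ _ _).to_subtype
  have (v : T) : Finite (G.avoidingPaths (insert x S) v y s) :=
    (avoidingPaths_finite _ _ _ _).to_subtype
  let extend : (Σ v : T, G.avoidingPaths (insert x S) v y s) → G.avoidingPaths S x y (s + 1) :=
    fun ⟨v, p⟩ => ⟨Walk.cons v.2.1.1 p.1, cons_mem_avoidingPaths v.2.1.1 hxS p.2⟩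
  have extend_injective : Function.Injective extend := by
    rintro ⟨⟨v, hv⟩, p, hp⟩ ⟨⟨v', hv'⟩, p', hp'⟩ h
    obtain ⟨rfl, hpp'⟩ := (Walk.cons.injEq ..).mp (congrArg Subtype.val h)
    cases eq_of_heq hpp'
    rfl
  calc T.ncard * n
      = ∑ v : T, n := by
        rw [Finset.sum_const, Finset.card_univ, smul_eq_mul, ← Nat.card_eq_fintype_card,
          Nat.card_coe_set_eq]
    _ ≤ ∑ v : T, Nat.card (G.avoidingPaths (insert x S) v y s) :=
      Finset.sum_le_sum fun v _ => (h v v.2).trans_eq (Nat.card_coe_set_eq _).symm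
    _ = Nat.card (Σ v : T, G.avoidingPaths (insert x S) v y s) := Nat.card_sigma.symm
    _ ≤ (G.avoidingPaths S x y (s + 1)).ncard := Nat.card_le_card_of_injective _ extend_injective

theorem pow_le_ncard_avoidingPaths [Finite V] {k : ℕ}
    (hk : ∀ u v : V, G.Adj u v → k ≤ (G.neighborSet u ∩ G.neighborSet v).ncard)
    {s : ℕ} (hs : 2 ≤ s) {S : Set V} {x y : V} (hxy : G.Adj x y) (hxS : x ∉ S) (hyS : y ∉ S) :
    (k - s - S.ncard) ^ (s - 2) ≤ (G.avoidingPaths S x y s).ncard := by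
  induction s, hs using Nat.le_induction generalizing S x y with
  | base => simpa using one_le_ncard_avoidingPaths_two hxy hxS hyS
  | succ s hs ih =>
    have hcommon : k - S.ncard ≤ ((G.neighborSet x ∩ G.neighborSet y) \ S).ncard := by
      have := Set.ncard_le_ncard_sdiff_add_ncard (G.neighborSet x ∩ G.neighborSet y) S
      have := hk x y hxy
      omega
    have hrest : ∀ v ∈ (G.neighborSet x ∩ G.neighborSet y) \ S,
        (k - s - (S.ncard + 1)) ^ (s - 2) ≤ (G.avoidingPaths (insert x S) v y s).ncard := by
      rintro v ⟨⟨hxv, hvy⟩, hvS⟩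
      rw [← Set.ncard_insert_of_notMem hxS]
      refine ih hvy.symm ?_ ?_
      · rintro (rfl | hv)
        exacts [hxv.ne rfl, hvS hv]
      · rintro (rfl | hy)
        exacts [hxy.ne rfl, hyS hy]
    calc (k - (s + 1) - S.ncard) ^ (s + 1 - 2)
        = (k - (s + 1) - S.ncard) * (k - s - (S.ncard + 1)) ^ (s - 2) := by
          rw [show s + 1 - 2 = s - 2 + 1 by omega, pow_succ', show k - s - (S.ncard + 1) =
            k - (s + 1) - S.ncard by omega]
      _ ≤ ((G.neighborSet x ∩ G.neighborSet y) \ S).ncard *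
            (k - s - (S.ncard + 1)) ^ (s - 2) := by gcongr; omega
      _ ≤ (G.avoidingPaths S x y (s + 1)).ncard :=
        ncard_mul_le_ncard_avoidingPaths_succ hxS hrest

end SimpleGraph

theorem stmt13_general {V : Type*} [Fintype V] (G : SimpleGraph V) (k t : ℕ)
    (hk : ∀ u v : V, G.Adj u v → k ≤ (G.neighborSet u ∩ G.neighborSet v).ncard)
    (ht : 2 ≤ t) (x y : V) (hxy : G.Adj x y) :
    (k - t) ^ (t - 2) ≤ pathCount G x y t := by
  have h := pow_le_ncard_avoidingPaths hk ht hxy (Set.notMem_empty x) (Set.notMem_empty y)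
  have hpaths : G.avoidingPaths ∅ x y t = {w : G.Walk x y | w.IsPath ∧ w.length + 1 = t} := by
    simp [avoidingPaths]
  rwa [Set.ncard_empty, Nat.sub_zero, hpaths] at h

/-- If every edge of `G` lies in at least `k` triangles (any two adjacent vertices have at
least `k` common neighbors), then for any edge `{x,y}` and any `2 ≤ t ≤ k`, the number of
simple paths on `t` vertices from `x` to `y` is at least `(k - t)^(t-2)`. -/
theorem stmt13 {V : Type*} [Fintype V] (G : SimpleGraph V) (k t : ℕ)
    (hk : ∀ u v : V, G.Adj u v → k ≤ (G.neighborSet u ∩ G.neighborSet v).ncard)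
    (ht : 2 ≤ t) (htk : t ≤ k) (x y : V) (hxy : G.Adj x y) :
    (k - t) ^ (t - 2) ≤ pathCount G x y t :=
  stmt13_general G k t hk ht x y hxy
end

section
/- Fix 0 ≤ s < r and let t = t(n) = o(√N₁). If p = p(n) satisfies p = o(n^{-s/t}/N₁), then the probability that G_p(n,r,s) contains a cycle of length t tends to 0 as n → ∞. -/
open Filter

def johnsonGraph (n r s : ℕ) : SimpleGraph {x : Finset (Fin n) // x.card = r} where
  Adj x y := x ≠ y ∧ ((x : Finset (Fin n)) ∩ (y : Finset (Fin n))).card = s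
  symm := ⟨fun x y h => ⟨h.1.symm, by rw [Finset.inter_comm]; exact h.2⟩⟩
  loopless := ⟨fun x h => h.1 rfl⟩

/-- the number of subgraphs of `G` isomorphic to the cycle on `t` vertices -/
noncomputable def cycleCount {V : Type*} (G : SimpleGraph V) (t : ℕ) : ℕ :=
  Set.ncard {H : G.Subgraph | Nonempty (H.coe ≃g SimpleGraph.cycleGraph t)}

/-- the common degree `N₁ = choose r s * choose (n-r) (r-s)` of `G(n,r,s)` -/
def N1 (n r s : ℕ) : ℕ := r.choose s * (n - r).choose (r - s)

open Classical in
/-- expectation of `f` under the binomial random subgraph of `G` where each edge is kept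
independently with probability `p` -/
noncomputable def randomSubgraphExp {V : Type*} [Fintype V] (G : SimpleGraph V) (p : ℝ)
    (f : SimpleGraph V → ℝ) : ℝ :=
  ∑ S ∈ G.edgeFinset.powerset,
    p ^ S.card * (1 - p) ^ (G.edgeFinset.card - S.card) * f (SimpleGraph.fromEdgeSet ↑S)

/-- `E X`, the expected number of copies of `C_t` in `G_p(n,r,s)` -/
noncomputable def EX (n r s t : ℕ) (p : ℝ) : ℝ :=
  randomSubgraphExp (johnsonGraph n r s) p (fun H => (cycleCount H t : ℝ))

/-- `Var X`, the variance of the number of copies of `C_t` in `G_p(n,r,s)` -/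
noncomputable def VarX (n r s t : ℕ) (p : ℝ) : ℝ :=
  randomSubgraphExp (johnsonGraph n r s) p
    (fun H => ((cycleCount H t : ℝ) - EX n r s t p) ^ 2)

open Classical in
/-- the probability that `G_p(n,r,s)` contains a cycle of length `t` -/
noncomputable def probContainsCycle (n r s t : ℕ) (p : ℝ) : ℝ :=
  randomSubgraphExp (johnsonGraph n r s) p
    (fun H => if ∃ (v : {x : Finset (Fin n) // x.card = r}) (w : H.Walk v v),
        w.IsCycle ∧ w.length = t then 1 else 0)

/-! A cycle of length `t` in `G_p` is a closed trail of length `t` in `G`, whose `t` distinct edges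
all survive with probability `p ^ t`. A `G(n,r,s)` has `C(n,r)` vertices and is `N₁`-regular, so it
has at most `C(n,r) N₁^(t-1)` closed walks of length `t`, and `C(n,r) = O(n^s N₁)`. By the union
bound the probability is `O((n^(s/t) N₁ p)^t)`, which tends to `0` because `n^(s/t) N₁ p → 0`. -/

open Finset
open scoped Nat

namespace Finset

lemma sum_superset_pow_mul_one_sub_pow {α : Type*} [DecidableEq α] (p : ℝ) {E F : Finset α}
    (hF : F ⊆ E) :
    ∑ S ∈ E.powerset with F ⊆ S, p ^ #S * (1 - p) ^ (#E - #S) = p ^ #F := by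
  have himage : {S ∈ E.powerset | F ⊆ S} = (E \ F).powerset.image (· ∪ F) := by
    ext S
    simp only [mem_filter, mem_powerset, mem_image]
    constructor
    · rintro ⟨hSE, hFS⟩
      exact ⟨S \ F, sdiff_subset_sdiff hSE le_rfl, sdiff_union_of_subset hFS⟩
    · rintro ⟨T, hT, rfl⟩
      exact ⟨union_subset (hT.trans sdiff_subset) hF, subset_union_right⟩
  have hdisj : ∀ T ∈ (E \ F).powerset, Disjoint T F := fun T hT =>
    disjoint_of_subset_left (mem_powerset.1 hT) sdiff_disjoint
  have hinj : Set.InjOn (· ∪ F) ((E \ F).powerset : Set (Finset α)) := fun T₁ h₁ T₂ h₂ h => by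
    rw [← union_sdiff_cancel_right (hdisj T₁ h₁), ← union_sdiff_cancel_right (hdisj T₂ h₂)]
    exact congrArg (· \ F) h
  rw [himage, sum_image hinj]
  calc ∑ T ∈ (E \ F).powerset, p ^ #(T ∪ F) * (1 - p) ^ (#E - #(T ∪ F))
      = ∑ T ∈ (E \ F).powerset, p ^ #F * (p ^ #T * (1 - p) ^ (#(E \ F) - #T)) := by
        refine sum_congr rfl fun T hT => ?_
        rw [card_union_of_disjoint (hdisj T hT), card_sdiff_of_subset hF, pow_add,
          Nat.sub_add_eq, Nat.sub_right_comm]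
        ring
    _ = p ^ #F := by
        rw [← mul_sum, sum_pow_mul_eq_add_pow, add_sub_cancel, one_pow, mul_one]

end Finset

namespace SimpleGraph

variable {V : Type*} (G : SimpleGraph V)

lemma Walk.subsingleton_length_eq_one {u v : V} :
    Subsingleton {w : G.Walk u v // w.length = 1} := by
  refine ⟨fun ⟨w₁, h₁⟩ ⟨w₂, h₂⟩ => ?_⟩
  cases w₁ with
  | nil => simp at h₁
  | cons _ p₁ =>
    cases w₂ with
    | nil => simp at h₂
    | cons _ p₂ =>
      simp only [Walk.length_cons, add_eq_right, Walk.length_eq_zero_iff] at h₁ h₂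
      cases p₁ <;> cases p₂ <;> simp_all

lemma card_finsetWalkLength_succ_le [DecidableEq V] [G.LocallyFinite] {d : ℕ}
    (hd : ∀ v, G.degree v ≤ d) (k : ℕ) (u v : V) :
    #(G.finsetWalkLength (k + 1) u v) ≤ d ^ k := by
  induction k generalizing u with
  | zero =>
    rw [← card_set_walk_length_eq, pow_zero]
    exact Fintype.card_le_one_iff_subsingleton.2 (Walk.subsingleton_length_eq_one G)
  | succ k ih =>
    calc #(G.finsetWalkLength (k + 2) u v)
        ≤ ∑ w : G.neighborSet u, #(G.finsetWalkLength (k + 1) w v) :=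
          card_biUnion_le.trans (sum_le_sum fun w _ => (card_map _).le)
      _ ≤ ∑ _w : G.neighborSet u, d ^ k := sum_le_sum fun w _ => ih w
      _ ≤ d ^ (k + 1) := by
          rw [sum_const, card_univ, card_neighborSet_eq_degree, smul_eq_mul, pow_succ']
          exact Nat.mul_le_mul_right _ (hd u)

section RandomSubgraph

variable [Fintype V]

lemma randomSubgraphExp_mono {p : ℝ} (hp0 : 0 ≤ p) (hp1 : p ≤ 1) {f g : SimpleGraph V → ℝ}
    (hfg : ∀ H ≤ G, f H ≤ g H) : randomSubgraphExp G p f ≤ randomSubgraphExp G p g := by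
  classical
  have hq : 0 ≤ 1 - p := sub_nonneg.2 hp1
  refine sum_le_sum fun S hS => mul_le_mul_of_nonneg_left (hfg _ ?_) (by positivity)
  rw [fromEdgeSet_le]
  exact fun e he => mem_edgeFinset.1 (mem_powerset.1 hS he.1)

lemma randomSubgraphExp_nonneg {p : ℝ} (hp0 : 0 ≤ p) (hp1 : p ≤ 1) {f : SimpleGraph V → ℝ}
    (hf : ∀ H ≤ G, 0 ≤ f H) : 0 ≤ randomSubgraphExp G p f := by
  simpa [randomSubgraphExp] using randomSubgraphExp_mono G hp0 hp1 (f := 0) hf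

lemma randomSubgraphExp_sum {ι : Type*} (s : Finset ι) (p : ℝ) (f : ι → SimpleGraph V → ℝ) :
    randomSubgraphExp G p (fun H => ∑ i ∈ s, f i H) = ∑ i ∈ s, randomSubgraphExp G p (f i) := by
  simp only [randomSubgraphExp, mul_sum]
  exact sum_comm

open Classical in
lemma randomSubgraphExp_edgeSet_superset (p : ℝ) {F : Finset (Sym2 V)} (hF : ↑F ⊆ G.edgeSet) :
    randomSubgraphExp G p (fun H => if ↑F ⊆ H.edgeSet then 1 else 0) = p ^ #F := by
  have hFE : F ⊆ G.edgeFinset := fun e he => mem_edgeFinset.2 (hF he)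
  rw [randomSubgraphExp, ← sum_superset_pow_mul_one_sub_pow p hFE, sum_filter]
  refine sum_congr rfl fun S _ => ?_
  have hFS : ↑F ⊆ (fromEdgeSet (S : Set (Sym2 V))).edgeSet ↔ F ⊆ S := by
    rw [edgeSet_fromEdgeSet, Set.subset_sdiff, coe_subset, and_iff_left_iff_imp]
    exact fun _ => Set.disjoint_left.2 fun e he => G.not_isDiag_of_mem_edgeSet (hF he)
  simp only [hFS, mul_ite, mul_one, mul_zero]

open Classical in
lemma randomSubgraphExp_edges_subset_of_isTrail {u v : V} {w : G.Walk u v} (hw : w.IsTrail)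
    (p : ℝ) :
    randomSubgraphExp G p (fun H => if ↑w.edges.toFinset ⊆ H.edgeSet then 1 else 0)
      = p ^ w.length := by
  rw [randomSubgraphExp_edgeSet_superset G p fun e he => w.edges_subset_edgeSet
    (List.mem_toFinset.1 he), List.toFinset_card_of_nodup hw.edges_nodup, Walk.length_edges]

open Classical in
lemma ite_exists_cycle_le_sum_trails {H : SimpleGraph V} (hH : H ≤ G) (t : ℕ) :
    (if ∃ (v : V) (w : H.Walk v v), w.IsCycle ∧ w.length = t then 1 else 0 : ℝ) ≤
      ∑ v, ∑ w ∈ G.finsetWalkLength t v v with w.IsTrail,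
        if ↑w.edges.toFinset ⊆ H.edgeSet then 1 else 0 := by
  have hnonneg : ∀ v, ∀ w : G.Walk v v,
      (0 : ℝ) ≤ if ↑w.edges.toFinset ⊆ H.edgeSet then 1 else 0 := fun _ _ => by positivity
  split_ifs with hcycle
  · obtain ⟨v, w, hw, rfl⟩ := hcycle
    have hmem : w.mapLe hH ∈ (G.finsetWalkLength w.length v v).filter (·.IsTrail) := by
      simp [mem_finsetWalkLength_iff, hw.isTrail]
    have hedges : ↑(w.mapLe hH).edges.toFinset ⊆ H.edgeSet := fun e he => by
      rw [mem_coe, List.mem_toFinset, Walk.edges_mapLe_eq_edges] at he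
      exact w.edges_subset_edgeSet he
    calc (1 : ℝ) = if ↑(w.mapLe hH).edges.toFinset ⊆ H.edgeSet then 1 else 0 :=
          (if_pos hedges).symm
      _ ≤ ∑ w' ∈ G.finsetWalkLength w.length v v with w'.IsTrail,
            if ↑w'.edges.toFinset ⊆ H.edgeSet then 1 else 0 :=
          single_le_sum (fun w' _ => hnonneg v w') hmem
      _ ≤ _ := single_le_sum (f := fun v => ∑ w' ∈ G.finsetWalkLength w.length v v with
            w'.IsTrail, if ↑w'.edges.toFinset ⊆ H.edgeSet then (1 : ℝ) else 0)
          (fun v _ => sum_nonneg fun w' _ => hnonneg v w') (mem_univ v)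
  · exact sum_nonneg fun v _ => sum_nonneg fun w' _ => hnonneg v w'

open Classical in
theorem randomSubgraphExp_exists_cycle_le {d : ℕ} (hd : ∀ v, G.degree v ≤ d) {p : ℝ}
    (hp0 : 0 ≤ p) (hp1 : p ≤ 1) {t : ℕ} (ht : t ≠ 0) :
    randomSubgraphExp G p
        (fun H => if ∃ (v : V) (w : H.Walk v v), w.IsCycle ∧ w.length = t then 1 else 0)
      ≤ Fintype.card V * d ^ (t - 1) * p ^ t := by
  have htrail : ∀ v, ∀ w ∈ (G.finsetWalkLength t v v).filter (·.IsTrail),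
      randomSubgraphExp G p (fun H => if ↑w.edges.toFinset ⊆ H.edgeSet then 1 else 0)
        = p ^ t := fun v w hw => by
    rw [mem_filter, mem_finsetWalkLength_iff] at hw
    rw [randomSubgraphExp_edges_subset_of_isTrail G hw.2, hw.1]
  calc _ ≤ randomSubgraphExp G p (fun H => ∑ v, ∑ w ∈ G.finsetWalkLength t v v with w.IsTrail,
          if ↑w.edges.toFinset ⊆ H.edgeSet then 1 else 0) :=
        randomSubgraphExp_mono G hp0 hp1 fun H hH => ite_exists_cycle_le_sum_trails G hH t
    _ = ∑ v, #((G.finsetWalkLength t v v).filter (·.IsTrail)) * p ^ t := by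
        simp only [randomSubgraphExp_sum]
        exact sum_congr rfl fun v _ => by rw [sum_congr rfl (htrail v), sum_const, nsmul_eq_mul]
    _ ≤ ∑ _v : V, (d : ℝ) ^ (t - 1) * p ^ t := by
        gcongr with v
        obtain ⟨k, rfl⟩ := Nat.exists_eq_add_one_of_ne_zero ht
        exact_mod_cast (card_filter_le _ _).trans (G.card_finsetWalkLength_succ_le hd k v v)
    _ = Fintype.card V * d ^ (t - 1) * p ^ t := by
        rw [sum_const, card_univ, nsmul_eq_mul, mul_assoc]

end RandomSubgraph

end SimpleGraph

lemma johnsonGraph_degree_le (n r s : ℕ) [DecidableRel (johnsonGraph n r s).Adj]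
    (x : {x : Finset (Fin n) // x.card = r}) :
    (johnsonGraph n r s).degree x ≤ N1 n r s := by
  rw [← SimpleGraph.card_neighborFinset_eq_degree]
  have hsplit : ∀ y : {x : Finset (Fin n) // x.card = r}, (y : Finset (Fin n)) \ x ∪ (y ∩ x) = y :=
    fun y => sdiff_union_inter _ _
  calc #((johnsonGraph n r s).neighborFinset x)
      ≤ #(powersetCard s (x : Finset (Fin n)) ×ˢ powersetCard (r - s) (x : Finset (Fin n))ᶜ) := by
        refine card_le_card_of_injOn (fun y => ((y : Finset (Fin n)) ∩ x, (y : Finset (Fin n)) \ x))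
          (fun y hy => ?_) (fun y₁ _ y₂ _ h => ?_)
        · obtain ⟨-, hyx⟩ := (SimpleGraph.mem_neighborFinset _ _ _).1 hy
          rw [inter_comm] at hyx
          have hcard := card_sdiff_add_card_inter (y : Finset (Fin n)) x
          rw [hyx, y.2] at hcard
          simp only [coe_product, Set.mem_prod, mem_coe, mem_powersetCard]
          exact ⟨⟨inter_subset_right, hyx⟩, fun i hi => mem_compl.2 (mem_sdiff.1 hi).2, by omega⟩
        · simp only [Prod.mk.injEq] at h
          rw [Subtype.ext_iff, ← hsplit y₁, ← hsplit y₂, h.1, h.2]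
    _ = N1 n r s := by
        rw [card_product, card_powersetCard, card_powersetCard, card_compl, Fintype.card_fin, x.2]
        rfl

lemma choose_le_mul_pow_mul_N1 {r s n : ℕ} (hs : s ≤ r) (hn : 4 * r ≤ n) :
    n.choose r ≤ 2 ^ r * r ! * (n ^ s * N1 n r s) := by
  have hpow : n ^ (r - s) ≤ 2 ^ (r - s) * (n - r + 1 - (r - s)) ^ (r - s) := by
    rw [← mul_pow]
    exact Nat.pow_le_pow_left (by omega) _
  have hdesc : (n - r + 1 - (r - s)) ^ (r - s) ≤ (r - s)! * (n - r).choose (r - s) := by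
    rw [← Nat.descFactorial_eq_factorial_mul_choose]
    exact Nat.pow_sub_le_descFactorial (n - r) (r - s)
  have hN1 : (n - r).choose (r - s) ≤ N1 n r s := Nat.le_mul_of_pos_left _ (Nat.choose_pos hs)
  calc n.choose r ≤ n ^ s * n ^ (r - s) := by
        rw [← pow_add, Nat.add_sub_cancel' hs]
        exact Nat.choose_le_pow n r
    _ ≤ n ^ s * (2 ^ (r - s) * ((r - s)! * (n - r).choose (r - s))) :=
        Nat.mul_le_mul_left _ (hpow.trans (Nat.mul_le_mul_left _ hdesc))
    _ ≤ n ^ s * (2 ^ r * (r ! * N1 n r s)) := by gcongr <;> omega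
    _ = 2 ^ r * r ! * (n ^ s * N1 n r s) := by ring

lemma probContainsCycle_le {n r s t : ℕ} (hs : s ≤ r) (hn : 4 * r ≤ n) (ht : t ≠ 0) {p : ℝ}
    (hp0 : 0 ≤ p) (hp1 : p ≤ 1) :
    probContainsCycle n r s t p
      ≤ 2 ^ r * r ! * ((n : ℝ) ^ ((s : ℝ) / t) * N1 n r s * p) ^ t := by
  classical
  have hcard : Fintype.card {x : Finset (Fin n) // x.card = r} = n.choose r := by simp
  have hchoose : (n.choose r : ℝ) ≤ 2 ^ r * r ! * (n ^ s * N1 n r s) := by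
    exact_mod_cast choose_le_mul_pow_mul_N1 hs hn
  have hroot : ((n : ℝ) ^ ((s : ℝ) / t)) ^ t = (n : ℝ) ^ s := by
    rw [← Real.rpow_natCast, ← Real.rpow_mul (Nat.cast_nonneg n),
      div_mul_cancel₀ _ (Nat.cast_ne_zero.2 ht), Real.rpow_natCast]
  calc probContainsCycle n r s t p ≤ n.choose r * (N1 n r s : ℝ) ^ (t - 1) * p ^ t := by
        rw [← hcard]
        exact SimpleGraph.randomSubgraphExp_exists_cycle_le _ (johnsonGraph_degree_le n r s)
          hp0 hp1 ht
    _ ≤ 2 ^ r * r ! * (n ^ s * N1 n r s) * (N1 n r s : ℝ) ^ (t - 1) * p ^ t := by gcongr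
    _ = 2 ^ r * r ! * ((n : ℝ) ^ ((s : ℝ) / t) * N1 n r s * p) ^ t := by
        obtain ⟨k, rfl⟩ := Nat.exists_eq_add_one_of_ne_zero ht
        rw [mul_pow, mul_pow, hroot, Nat.add_sub_cancel, pow_succ]
        ring

theorem stmt17_general (r s : ℕ) (hs : s < r) (t : ℕ → ℕ) (ht3 : ∀ n, 3 ≤ t n)
    (p : ℕ → ℝ) (hp : ∀ n, p n ∈ Set.Icc (0 : ℝ) 1)
    (hpo : Tendsto (fun n : ℕ =>
        p n / ((n : ℝ) ^ (-(s : ℝ) / (t n : ℝ)) / (N1 n r s : ℝ))) atTop (nhds 0)) :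
    Tendsto (fun n : ℕ => probContainsCycle n r s (t n) (p n)) atTop (nhds 0) := by
  set q := fun n : ℕ => p n / ((n : ℝ) ^ (-(s : ℝ) / (t n : ℝ)) / (N1 n r s : ℝ))
  have hq_eq : ∀ n, q n = (n : ℝ) ^ ((s : ℝ) / t n) * N1 n r s * p n := fun n => by
    simp only [q]
    rw [neg_div, Real.rpow_neg (Nat.cast_nonneg n), div_div_eq_mul_div, div_inv_eq_mul]
    ring
  have hbound : ∀ᶠ n in atTop, probContainsCycle n r s (t n) (p n) ≤ 2 ^ r * r ! * q n := by
    filter_upwards [hpo.eventually_le_const zero_lt_one, eventually_ge_atTop (4 * r)]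
      with n hq1 hn
    have ht0 : t n ≠ 0 := by have := ht3 n; omega
    have hq0 : 0 ≤ q n := by rw [hq_eq]; have := (hp n).1; positivity
    calc probContainsCycle n r s (t n) (p n) ≤ 2 ^ r * r ! * q n ^ t n := by
          rw [hq_eq]
          exact probContainsCycle_le hs.le hn ht0 (hp n).1 (hp n).2
      _ ≤ 2 ^ r * r ! * q n := by gcongr; exact pow_le_of_le_one hq0 hq1 ht0
  refine squeeze_zero' (Eventually.of_forall fun n => ?_) hbound (by simpa using hpo.const_mul _)
  exact SimpleGraph.randomSubgraphExp_nonneg _ (hp n).1 (hp n).2 fun _ _ => by positivity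

/-- 0-statement: if `t = o(√N₁)` and `p = o(n^(-s/t) / N₁)`, then
`P(C_t ⊆ G_p(n,r,s)) → 0`. -/
theorem stmt17 (r s : ℕ) (hs : s < r) (t : ℕ → ℕ) (ht3 : ∀ n, 3 ≤ t n)
    (hto : Tendsto (fun n : ℕ => (t n : ℝ) / Real.sqrt (N1 n r s)) atTop (nhds 0))
    (p : ℕ → ℝ) (hp : ∀ n, p n ∈ Set.Icc (0 : ℝ) 1)
    (hpo : Tendsto (fun n : ℕ =>
        p n / ((n : ℝ) ^ (-(s : ℝ) / (t n : ℝ)) / (N1 n r s : ℝ))) atTop (nhds 0)) :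
    Tendsto (fun n : ℕ => probContainsCycle n r s (t n) (p n)) atTop (nhds 0) :=
  stmt17_general r s hs t ht3 p hp hpo
end
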